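/- The rewrite system consisting of the single rule f(g(h(x))) → g(x) is an LM-system, yet the congruence class of g(y) modulo this system is infinite; hence not every LM-system has a finite equational theory. -/

import Mathlib

/-! Basic first-order terms, positions, substitutions and rewriting. -/

inductive Term (F : Type) : Type
  | var : Nat → Term F
  | app : F → List (Term F) → Term F

namespace Term

def subst {F : Type} (σ : Nat → Term F) : Term F → Term F
  | var n => σ n
  | app f ts => app f (ts.attach.map fun ⟨t, _⟩ => t.subst σ)

def root {F : Type} : Term F → Option F
  | var _ => none
  | app f _ => some f

def label {F : Type} : Term F → F ⊕ Nat
  | var n => Sum.inr n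
  | app f _ => Sum.inl f

def IsVar {F : Type} : Term F → Prop
  | var _ => True
  | app _ _ => False

def varsL {F : Type} : Term F → List Nat
  | var n => [n]
  | app _ ts => (ts.attach.map fun ⟨t, _⟩ => t.varsL).flatten

end Term

abbrev Rule (F : Type) := Term F × Term F
abbrev TRS (F : Type) := Set (Rule F)

/-- `SubtermAt t p u` : the subterm of `t` at position `p` is `u`. -/
inductive SubtermAt {F : Type} : Term F → List Nat → Term F → Prop
  | here (t : Term F) : SubtermAt t [] t
  | there {f : F} {ts : List (Term F)} {i : Nat} {u : Term F} {p : List Nat} {v : Term F} :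
      ts[i]? = some u → SubtermAt u p v → SubtermAt (Term.app f ts) (i :: p) v

/-- `ReplaceAt t p v t'` : replacing the subterm of `t` at position `p` by `v` yields `t'`. -/
inductive ReplaceAt {F : Type} : Term F → List Nat → Term F → Term F → Prop
  | here (t u : Term F) : ReplaceAt t [] u u
  | there {f : F} {ts : List (Term F)} {i : Nat} {u : Term F} {p : List Nat} {v w : Term F} :
      ts[i]? = some u → ReplaceAt u p v w →
      ReplaceAt (Term.app f ts) (i :: p) v (Term.app f (ts.set i w))

variable {F : Type}

/-- One rewrite step using the given rule (at some position, with some substitution). -/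
def RuleStep (ρ : Rule F) (s t : Term F) : Prop :=
  ∃ (σ : Nat → Term F) (p : List Nat),
    SubtermAt s p (ρ.1.subst σ) ∧ ReplaceAt s p (ρ.2.subst σ) t

def OneStep (R : TRS F) (s t : Term F) : Prop := ∃ ρ ∈ R, RuleStep ρ s t

/-- A rewrite step at the root position. -/
def RootStep (R : TRS F) (s t : Term F) : Prop :=
  ∃ ρ ∈ R, ∃ σ : Nat → Term F, s = ρ.1.subst σ ∧ t = ρ.2.subst σ

def StarRW (R : TRS F) : Term F → Term F → Prop := Relation.ReflTransGen (OneStep R)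
def Plus (R : TRS F) : Term F → Term F → Prop := Relation.TransGen (OneStep R)
/-- Convertibility (the congruence / equational theory generated by `R`). -/
def Conv (R : TRS F) : Term F → Term F → Prop := Relation.EqvGen (OneStep R)
def Joinable (R : TRS F) (s t : Term F) : Prop := ∃ u, StarRW R s u ∧ StarRW R t u
def NormalForm (R : TRS F) (t : Term F) : Prop := ∀ u, ¬ OneStep R t u
/-- `t` is the `R`-normal form of `s`. -/
def NFof (R : TRS F) (s t : Term F) : Prop := StarRW R s t ∧ NormalForm R t
def Terminating (R : TRS F) : Prop := WellFounded (fun a b : Term F => OneStep R b a)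
def Confluent (R : TRS F) : Prop := ∀ s t u, StarRW R s t → StarRW R s u → Joinable R t u
def Convergent (R : TRS F) : Prop := Confluent R ∧ Terminating R

/-- every proper subterm is irreducible -/
def EpsIrreducible (R : TRS F) (t : Term F) : Prop :=
  ∀ p u, SubtermAt t p u → p ≠ [] → NormalForm R u

def InnermostRedex (R : TRS F) (t : Term F) : Prop :=
  EpsIrreducible R t ∧ ¬ NormalForm R t

/-- Forward-closed, via the one-step-to-normal-form characterization. -/
def FCclosed (R : TRS F) : Prop :=
  ∀ t, InnermostRedex R t → ∀ u, NFof R t u → OneStep R t u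

def Unifies (σ : Nat → Term F) (s t : Term F) : Prop := s.subst σ = t.subst σ

def IsMGU (σ : Nat → Term F) (s t : Term F) : Prop :=
  Unifies σ s t ∧ ∀ τ, Unifies τ s t → ∃ δ, ∀ x, τ x = (σ x).subst δ

def IsRenaming (ρ : Nat → Term F) : Prop :=
  ∃ f : Nat → Nat, Function.Injective f ∧ ∀ n, ρ n = Term.var (f n)

/-- Redundancy criterion for an oriented equation `e` whose right-hand side is
reachable from its left-hand side: some proper subterm of the lhs is reducible. -/
def Redundant (R : TRS F) (e : Rule F) : Prop :=
  ∃ p u, p ≠ ([] : List Nat) ∧ SubtermAt e.1 p u ∧ ¬ NormalForm R u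

/-- `R₁ ↝ R₂`: forward overlaps of rules of `R₂` (renamed apart) into
right-hand sides of rules of `R₁`, at non-variable positions, via an mgu. -/
def FStep (R₁ R₂ : TRS F) : TRS F :=
  { e | ∃ (l₁ r₁ l₂ r₂ : Term F) (ρ : Nat → Term F) (p : List Nat) (u : Term F)
          (σ : Nat → Term F) (r₁' : Term F),
      (l₁, r₁) ∈ R₁ ∧ (l₂, r₂) ∈ R₂ ∧ IsRenaming ρ ∧
      SubtermAt r₁ p u ∧ ¬ u.IsVar ∧ IsMGU σ u (l₂.subst ρ) ∧
      ReplaceAt r₁ p (r₂.subst ρ) r₁' ∧ e = (l₁.subst σ, r₁'.subst σ) }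

def FCiter (R : TRS F) : Nat → TRS F
  | 0 => R
  | k + 1 => FCiter R k ∪ { e | e ∈ FStep (FCiter R k) R ∧ ¬ Redundant (FCiter R k) e }

def FCinf (R : TRS F) : TRS F := ⋃ k, FCiter R k

/-- Forward-closed, via the forward-closure construction: `FC(R) = R`. -/
def ForwardClosedFC (R : TRS F) : Prop := FCinf R = R

/-- `RHS(R)`: `R` together with the conclusions of right-hand-side critical
pair inferences (second rule renamed apart). -/
def RHSset (R : TRS F) : TRS F :=
  R ∪ { e | ∃ (s t u₀ v₀ : Term F) (ρ σ : Nat → Term F), (s, t) ∈ R ∧ (u₀, v₀) ∈ R ∧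
        IsRenaming ρ ∧ IsMGU σ t (v₀.subst ρ) ∧
        s.subst σ ≠ (u₀.subst ρ).subst σ ∧ e = (s.subst σ, (u₀.subst ρ).subst σ) }

/-- the (unordered) pairs of root symbols of two equations coincide -/
def RootPairSimilar (e₁ e₂ : Rule F) : Prop :=
  (e₁.1.root = e₂.1.root ∧ e₁.2.root = e₂.2.root) ∨
  (e₁.1.root = e₂.2.root ∧ e₁.2.root = e₂.1.root)

def QuasiDet (E : TRS F) : Prop :=
  (∀ e ∈ E, ¬ e.1.IsVar ∧ ¬ e.2.IsVar) ∧
  (∀ e ∈ E, e.1.root ≠ e.2.root) ∧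
  (∀ e₁ ∈ E, ∀ e₂ ∈ E, e₁ ≠ e₂ → ¬ RootPairSimilar e₁ e₂)

def HasRootPairRepetition (E : TRS F) : Prop :=
  ∃ e₁ ∈ E, ∃ e₂ ∈ E, e₁ ≠ e₂ ∧ RootPairSimilar e₁ e₂

def VarPreserving (R : TRS F) : Prop :=
  ∀ e ∈ R, ∀ n, n ∈ Term.varsL e.1 ↔ n ∈ Term.varsL e.2

def RightReduced (R : TRS F) : Prop := ∀ e ∈ R, NormalForm R e.2

def AlmostLeftReduced (R : TRS F) : Prop :=
  ¬ ∃ (l₁ r₁ l₂ r₂ : Term F) (p : List Nat) (u : Term F) (σ : Nat → Term F),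
      (l₁, r₁) ∈ R ∧ (l₂, r₂) ∈ R ∧ p ≠ [] ∧ SubtermAt l₁ p u ∧ u = l₂.subst σ

def NonSubtermCollapsing (R : TRS F) : Prop :=
  ¬ ∃ (t u : Term F) (p : List Nat), p ≠ [] ∧ SubtermAt u p t ∧ Conv R t u

structure LMSystem (R : TRS F) : Prop where
  convergent : Convergent R
  almostLeftReduced : AlmostLeftReduced R
  rightReduced : RightReduced R
  nonCollapsing : NonSubtermCollapsing R
  forwardClosed : FCclosed R
  quasiDet : QuasiDet (RHSset R)

/-- the symbol (function symbol or variable) of a term at a position, if defined -/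
def labelAt {F : Type} : List Nat → Term F → Option (F ⊕ Nat)
  | [], t => some t.label
  | i :: p, Term.app _ ts => (ts[i]?).bind (labelAt p)
  | _ :: _, Term.var _ => none

/-- outermost distinguishing position -/
def ODP (s t : Term F) (p : List Nat) : Prop :=
  (labelAt p s ≠ none ∨ labelAt p t ≠ none) ∧
  labelAt p s ≠ labelAt p t ∧
  ∀ q, q <+: p → q ≠ p → labelAt q s = labelAt q t


inductive Sym3 : Type
  | f | g | h

/-!
The rule `f(g(h(x))) → g(x)` strictly decreases size and has no overlaps, so contracting
innermost redexes gives a normal-form function `nf`; convergence, right-reducedness and forward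
closure follow from it. Convertible terms have the same `nf` and the same number of `g`s. If `t`
sits properly inside `u` under a `g`-free context, each symbol passed on the way up strictly
increases `signedSize ∘ nf` (the size, negated for `g`-rooted terms): a contraction turns
`g(h(s))` into `g(s)`, and otherwise the result is a larger term not rooted at `g`. So no term is
convertible to a proper subterm of itself. Finally `f^n(g(h^n(x)))` reduces to `g(x)` for every `n`.
-/

theorem List.sum_set_add {M : Type*} [AddCommMonoid M] (l : List M) {i : ℕ} {b : M}
    (hi : l[i]? = some b) (a : M) : (l.set i a).sum + b = l.sum + a := by
  induction l generalizing i with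
  | nil => simp at hi
  | cons x l ih =>
    cases i with
    | zero =>
      obtain rfl : x = b := by simpa using hi
      simp only [List.set_cons_zero, List.sum_cons]
      abel
    | succ i => simp [ih (by simpa using hi), add_assoc]

namespace Term

@[simp] theorem subst_var (σ : ℕ → Term F) (n : ℕ) : (var n).subst σ = σ n := by
  simp [subst]

@[simp] theorem subst_app (σ : ℕ → Term F) (c : F) (ts : List (Term F)) :
    (app c ts).subst σ = app c (ts.map (subst σ)) := by
  simp [subst]

@[elab_as_elim]
theorem induction_mem {P : Term F → Prop} (var : ∀ n, P (var n))
    (app : ∀ c ts, (∀ t ∈ ts, P t) → P (app c ts)) : ∀ t, P t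
  | .var n => var n
  | .app c ts => app c ts fun t _ => induction_mem var app t

def weight (w : F → ℕ) (w₀ : ℕ) : Term F → ℕ
  | var _ => w₀
  | app c ts => w c + (ts.map (weight w w₀)).sum

abbrev size : Term F → ℕ := weight (fun _ => 1) 1

section weight

variable {w : F → ℕ} {w₀ : ℕ}

@[simp] theorem weight_var (n : ℕ) : weight w w₀ (var n) = w₀ := by simp [weight]

@[simp] theorem weight_app (c : F) (ts : List (Term F)) :
    weight w w₀ (app c ts) = w c + (ts.map (weight w w₀)).sum := by
  simp [weight]

theorem add_weight_le_of_mem {c : F} {ts : List (Term F)} {t : Term F} (ht : t ∈ ts) :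
    w c + weight w w₀ t ≤ weight w w₀ (app c ts) := by
  have := List.le_sum_of_mem (List.mem_map_of_mem (f := weight w w₀) ht)
  simp only [weight_app]
  omega

theorem weight_le_of_subtermAt {u t : Term F} {p : List ℕ} (h : SubtermAt u p t) :
    weight w w₀ t ≤ weight w w₀ u := by
  induction h with
  | here => rfl
  | there hi _ ih =>
    exact ih.trans (le_add_self.trans (add_weight_le_of_mem (List.mem_of_getElem? hi)))

theorem weight_lt_of_subtermAt (hw : ∀ c, 0 < w c) {u t : Term F} {p : List ℕ}
    (h : SubtermAt u p t) (hp : p ≠ []) : weight w w₀ t < weight w w₀ u := by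
  cases h with
  | here => exact absurd rfl hp
  | there hi h =>
    have := add_weight_le_of_mem (w := w) (w₀ := w₀) (c := ‹F›) (List.mem_of_getElem? hi)
    have := hw ‹F›
    have := weight_le_of_subtermAt (w := w) (w₀ := w₀) h
    omega

theorem weight_app_set_add {c : F} {ts : List (Term F)} {i : ℕ} {u : Term F}
    (hi : ts[i]? = some u) (v : Term F) :
    weight w w₀ (app c (ts.set i v)) + weight w w₀ u =
      weight w w₀ (app c ts) + weight w w₀ v := by
  have := List.sum_set_add (ts.map (weight w w₀)) (i := i) (b := weight w w₀ u)
    (by simp [hi]) (weight w w₀ v)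
  simp only [weight_app, List.map_set]
  omega

end weight

theorem size_iterate_app (c : F) (n : ℕ) (t : Term F) :
    size ((fun s => app c [s])^[n] t) = n + size t := by
  induction n with
  | zero => simp
  | succ n ih =>
    simp only [Function.iterate_succ_apply', weight_app, List.map_singleton, List.sum_singleton,
      ih]
    omega

end Term

open Term

inductive CtxClosure (r : Term F → Term F → Prop) : Term F → Term F → Prop
  | root {s t : Term F} : r s t → CtxClosure r s t
  | arg {c : F} {ts : List (Term F)} {i : ℕ} {u v : Term F} :
      ts[i]? = some u → CtxClosure r u v → CtxClosure r (app c ts) (app c (ts.set i v))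

namespace CtxClosure

variable {r : Term F → Term F → Prop}

theorem eq_of_eq_map {α : Type*} {φ : Term F → α} {G : F → List α → α}
    (hφ : ∀ c ts, φ (app c ts) = G c (ts.map φ)) (hr : ∀ s t, r s t → φ s = φ t)
    {s t : Term F} (h : CtxClosure r s t) : φ s = φ t := by
  induction h with
  | root h => exact hr _ _ h
  | @arg c ts i u v hi _ ih =>
    obtain ⟨hlt, rfl⟩ := List.getElem?_eq_some_iff.1 hi
    rw [hφ, hφ, List.map_set, ← ih, ← List.getElem_map φ, List.set_getElem_self]
    simpa using hlt

theorem weight_lt {w : F → ℕ} {w₀ : ℕ}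
    (hr : ∀ s t, r s t → weight w w₀ t < weight w w₀ s)
    {s t : Term F} (h : CtxClosure r s t) : weight w w₀ t < weight w w₀ s := by
  induction h with
  | root h => exact hr _ _ h
  | arg hi _ ih =>
    have := weight_app_set_add (w := w) (w₀ := w₀) (c := ‹F›) hi ‹Term F›
    omega

end CtxClosure

section Rewriting

variable {R : TRS F}

theorem oneStep_iff_ctxClosure {s t : Term F} : OneStep R s t ↔ CtxClosure (RootStep R) s t := by
  constructor
  · rintro ⟨ρ, hρ, σ, p, hsub, hrep⟩
    generalize hl : ρ.1.subst σ = l at hsub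
    induction hsub generalizing t with
    | here => cases hrep; exact .root ⟨ρ, hρ, σ, hl.symm, rfl⟩
    | there hi _ ih =>
      cases hrep with
      | there hi' hrep =>
        cases hi.symm.trans hi'
        exact .arg hi (ih hrep hl)
  · intro h
    induction h with
    | root h =>
      obtain ⟨ρ, hρ, σ, rfl, rfl⟩ := h
      exact ⟨ρ, hρ, σ, [], .here _, .here _ _⟩
    | arg hi _ ih =>
      obtain ⟨ρ, hρ, σ, p, hsub, hrep⟩ := ih
      exact ⟨ρ, hρ, σ, _ :: p, .there hi hsub, .there hi hrep⟩

theorem OneStep.app_set {c : F} {ts : List (Term F)} {i : ℕ} {u v : Term F}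
    (hi : ts[i]? = some u) (h : OneStep R u v) : OneStep R (app c ts) (app c (ts.set i v)) :=
  oneStep_iff_ctxClosure.2 (.arg hi (oneStep_iff_ctxClosure.1 h))

theorem StarRW.app_map {c : F} {ts : List (Term F)} {φ : Term F → Term F}
    (h : ∀ t ∈ ts, StarRW R t (φ t)) : StarRW R (app c ts) (app c (ts.map φ)) := by
  suffices ∀ pre, StarRW R (app c (pre ++ ts)) (app c (pre ++ ts.map φ)) from this []
  induction ts with
  | nil => exact fun _ => .refl
  | cons a ts ih =>
    intro pre
    have hhead : StarRW R (app c (pre ++ a :: ts)) (app c (pre ++ φ a :: ts)) :=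
      (h a (by simp)).lift (fun x => app c (pre ++ x :: ts)) fun x y hxy => by
        have hx : (pre ++ x :: ts)[pre.length]? = some x := by simp
        simpa using OneStep.app_set (c := c) hx hxy
    have htail := ih (fun t ht => h t (by simp [ht])) (pre ++ [φ a])
    simp only [List.append_assoc, List.singleton_append] at htail
    rw [List.map_cons]
    exact hhead.trans htail

theorem StarRW.conv {s t : Term F} (h : StarRW R s t) : Conv R s t :=
  Relation.EqvGen.reflTransGen_le_eqvGen _ _ _ h

theorem Conv.eq_of_oneStep {α : Type*} {φ : Term F → α}
    (hφ : ∀ s t, OneStep R s t → φ s = φ t) {s t : Term F} (h : Conv R s t) :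
    φ s = φ t := by
  induction h with
  | rel _ _ h => exact hφ _ _ h
  | refl => rfl
  | symm _ _ _ ih => exact ih.symm
  | trans _ _ _ _ _ ih₁ ih₂ => exact ih₁.trans ih₂

theorem Conv.eq_of_eq_map {α : Type*} {φ : Term F → α} {G : F → List α → α}
    (hφ : ∀ c ts, φ (app c ts) = G c (ts.map φ))
    (hroot : ∀ s t, RootStep R s t → φ s = φ t) {s t : Term F} (h : Conv R s t) :
    φ s = φ t :=
  h.eq_of_oneStep fun _ _ hst => (oneStep_iff_ctxClosure.1 hst).eq_of_eq_map hφ hroot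

theorem NormalForm.eq_of_starRW {s t : Term F} (hs : NormalForm R s) (h : StarRW R s t) :
    s = t := by
  rcases h.cases_head with h | ⟨u, hsu, _⟩
  · exact h
  · exact absurd hsu (hs u)

theorem normalForm_app_iff {c : F} {ts : List (Term F)} :
    NormalForm R (app c ts) ↔
      (∀ t ∈ ts, NormalForm R t) ∧ ∀ v, ¬ RootStep R (app c ts) v := by
  constructor
  · intro h
    refine ⟨fun t ht v htv => ?_, fun v hv => h v (oneStep_iff_ctxClosure.2 (.root hv))⟩
    obtain ⟨i, hi⟩ := List.getElem?_of_mem ht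
    exact h _ (OneStep.app_set hi htv)
  · rintro ⟨hargs, hroot⟩ v hv
    cases oneStep_iff_ctxClosure.1 hv with
    | root h => exact hroot v h
    | arg hi h => exact hargs _ (List.mem_of_getElem? hi) _ (oneStep_iff_ctxClosure.2 h)

theorem terminating_of_rootStep_size_lt (h : ∀ s t, RootStep R s t → size t < size s) :
    Terminating R :=
  Subrelation.wf (fun hst => (oneStep_iff_ctxClosure.1 hst).weight_lt h)
    (InvImage.wf size wellFounded_lt)

theorem confluent_of_normalizer (nf : Term F → Term F) (hstar : ∀ t, StarRW R t (nf t))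
    (hstep : ∀ s t, OneStep R s t → nf s = nf t) : Confluent R := by
  intro s t u hst hsu
  refine ⟨nf s, ?_, ?_⟩
  · simpa [hst.conv.eq_of_oneStep hstep] using hstar t
  · simpa [hsu.conv.eq_of_oneStep hstep] using hstar u

theorem OneStep.iterate_app {c : F} {s t : Term F} (hst : OneStep R s t) (n : ℕ) :
    OneStep R ((fun s => app c [s])^[n] s) ((fun s => app c [s])^[n] t) := by
  induction n with
  | zero => exact hst
  | succ n ih =>
    simp only [Function.iterate_succ_apply']
    exact OneStep.app_set (ts := [_]) (i := 0) rfl ih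

end Rewriting

namespace FGH

open Sym3

def rules : TRS Sym3 := {(app f [app g [app h [var 0]]], app g [var 0])}

theorem rootStep_iff {s t : Term Sym3} :
    RootStep rules s t ↔ ∃ x, s = app f [app g [app h [x]]] ∧ t = app g [x] := by
  simp only [RootStep, rules, Set.mem_singleton_iff, exists_eq_left, subst_app, List.map,
    subst_var]
  exact ⟨fun ⟨σ, hσ⟩ => ⟨σ 0, hσ⟩, fun ⟨x, hx⟩ => ⟨fun _ => x, hx⟩⟩

def contract : Term Sym3 → Term Sym3
  | app f [app g [app h [x]]] => app g [x]
  | t => t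

theorem contract_eq_self {t : Term Sym3} (ht : ∀ x, t ≠ app f [app g [app h [x]]]) :
    contract t = t := by
  unfold contract
  split
  · exact absurd rfl (ht _)
  · rfl

@[simp] theorem contract_fgh (x : Term Sym3) :
    contract (app f [app g [app h [x]]]) = app g [x] := rfl

@[simp] theorem contract_app_of_ne_f {c : Sym3} (hc : c ≠ f) (ts : List (Term Sym3)) :
    contract (app c ts) = app c ts :=
  contract_eq_self fun _ hx => hc (app.inj hx).1

def nf : Term Sym3 → Term Sym3
  | var n => var n
  | app c ts => contract (app c (ts.map nf))

@[simp] theorem nf_var (n : ℕ) : nf (var n) = var n := by simp [nf]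

theorem nf_app (c : Sym3) (ts : List (Term Sym3)) :
    nf (app c ts) = contract (app c (ts.map nf)) := by simp [nf]

theorem nf_eq_of_oneStep {s t : Term Sym3} (hst : OneStep rules s t) : nf s = nf t := by
  refine (oneStep_iff_ctxClosure.1 hst).eq_of_eq_map (G := fun c l => contract (app c l)) nf_app
    fun s t hst => ?_
  obtain ⟨x, rfl, rfl⟩ := rootStep_iff.1 hst
  simp [nf_app]

theorem normalForm_g_app {x : Term Sym3} (hx : NormalForm rules x) :
    NormalForm rules (app g [x]) :=
  normalForm_app_iff.2 ⟨by simpa using hx, fun _ hst => by simp [rootStep_iff] at hst⟩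

theorem normalForm_nf : ∀ t, NormalForm rules (nf t) := by
  refine induction_mem (fun n v hv => ?_) fun c ts ih => ?_
  · rw [nf_var] at hv
    cases oneStep_iff_ctxClosure.1 hv with
    | root hroot => obtain ⟨x, hx, -⟩ := rootStep_iff.1 hroot; cases hx
  rw [nf_app]
  by_cases hredex : ∃ x, app c (ts.map nf) = app f [app g [app h [x]]]
  · obtain ⟨x, hx⟩ := hredex
    obtain ⟨rfl, a, rfl, ha⟩ : c = f ∧ ∃ a, ts = [a] ∧ nf a = app g [app h [x]] := by
      simpa using hx
    have hghx : NormalForm rules (app g [app h [x]]) := ha ▸ ih a (List.mem_singleton_self a)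
    have hhx := (normalForm_app_iff.1 hghx).1 _ (List.mem_singleton_self _)
    have hx := (normalForm_app_iff.1 hhx).1 _ (List.mem_singleton_self _)
    simpa [ha] using normalForm_g_app hx
  · push Not at hredex
    rw [contract_eq_self hredex]
    refine normalForm_app_iff.2 ⟨by simpa using ih, fun v hv => ?_⟩
    obtain ⟨x, hx, -⟩ := rootStep_iff.1 hv
    exact hredex x hx

theorem starRW_nf : ∀ t, StarRW rules t (nf t) := by
  refine induction_mem (fun n => by simpa using .refl) fun c ts ih => ?_
  rw [nf_app]
  have hargs : StarRW rules (app c ts) (app c (ts.map nf)) := StarRW.app_map ih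
  by_cases hredex : ∃ x, app c (ts.map nf) = app f [app g [app h [x]]]
  · obtain ⟨x, hx⟩ := hredex
    rw [hx] at hargs ⊢
    exact hargs.tail (oneStep_iff_ctxClosure.2 (.root (rootStep_iff.2 ⟨x, rfl, rfl⟩)))
  · push Not at hredex
    rwa [contract_eq_self hredex]

theorem nf_eq_self {t : Term Sym3} (ht : NormalForm rules t) : nf t = t :=
  (ht.eq_of_starRW (starRW_nf t)).symm

theorem convergent : Convergent rules := by
  refine ⟨confluent_of_normalizer nf starRW_nf fun _ _ => nf_eq_of_oneStep,
    terminating_of_rootStep_size_lt fun s t hst => ?_⟩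
  obtain ⟨x, rfl, rfl⟩ := rootStep_iff.1 hst
  simp only [weight_app, List.map, List.sum_cons, List.sum_nil]
  omega

def gWeight : Sym3 → ℕ
  | g => 1
  | f | h => 0

abbrev gCount : Term Sym3 → ℕ := weight gWeight 0

theorem gCount_eq_of_conv {s t : Term Sym3} (hst : Conv rules s t) : gCount s = gCount t := by
  refine hst.eq_of_eq_map (G := fun c l => gWeight c + l.sum) weight_app fun s t hst => ?_
  obtain ⟨x, rfl, rfl⟩ := rootStep_iff.1 hst
  simp [gWeight]

def signedSize (t : Term Sym3) : ℤ :=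
  match t with
  | app g _ => -(size t : ℤ)
  | _ => size t

theorem signedSize_le_size (t : Term Sym3) : signedSize t ≤ size t := by
  unfold signedSize
  split <;> omega

theorem signedSize_app_of_ne_g {c : Sym3} (hc : c ≠ g) (ts : List (Term Sym3)) :
    signedSize (app c ts) = size (app c ts) := by
  cases c <;> first | rfl | exact absurd rfl hc

theorem signedSize_nf_lt_of_mem {c : Sym3} (hc : c ≠ g) {ts : List (Term Sym3)} {t : Term Sym3}
    (ht : t ∈ ts) : signedSize (nf t) < signedSize (nf (app c ts)) := by
  rw [nf_app]
  by_cases hredex : ∃ x, app c (ts.map nf) = app f [app g [app h [x]]]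
  · obtain ⟨x, hx⟩ := hredex
    obtain ⟨rfl, a, rfl, ha⟩ : c = f ∧ ∃ a, ts = [a] ∧ nf a = app g [app h [x]] := by
      simpa using hx
    obtain rfl := List.mem_singleton.1 ht
    simp only [ha, contract_fgh, signedSize, weight_app, List.map,
      List.sum_cons, List.sum_nil]
    omega
  · push Not at hredex
    rw [contract_eq_self hredex, signedSize_app_of_ne_g hc]
    have : 1 + size (nf t) ≤ size (app c (ts.map nf)) :=
      add_weight_le_of_mem (w := fun _ => 1) (w₀ := 1) (List.mem_map_of_mem (f := nf) ht)
    have := signedSize_le_size (nf t)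
    omega

theorem signedSize_nf_add_length_le {u t : Term Sym3} {p : List ℕ} (hsub : SubtermAt u p t)
    (hg : gCount u = gCount t) : signedSize (nf t) + p.length ≤ signedSize (nf u) := by
  induction hsub with
  | here => simp
  | @there c ts i u' q t hi hsub ih =>
    have hmem := List.mem_of_getElem? hi
    have hle : gWeight c + gCount u' ≤ gCount (app c ts) := add_weight_le_of_mem hmem
    have hge : gCount t ≤ gCount u' := weight_le_of_subtermAt hsub
    have hc : c ≠ g := by rintro rfl; simp only [gWeight] at hle; omega
    have := ih (by omega)
    have := signedSize_nf_lt_of_mem hc hmem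
    simp only [List.length_cons, Nat.cast_add, Nat.cast_one]
    omega

theorem nonSubtermCollapsing : NonSubtermCollapsing rules := by
  rintro ⟨t, u, p, hp, hsub, hconv⟩
  have := signedSize_nf_add_length_le hsub (gCount_eq_of_conv hconv).symm
  rw [hconv.eq_of_oneStep fun _ _ => nf_eq_of_oneStep] at this
  have := List.length_pos_iff.2 hp
  omega

theorem almostLeftReduced : AlmostLeftReduced rules := by
  rintro ⟨l₁, r₁, l₂, r₂, p, u, σ, h₁, h₂, hp, hsub, rfl⟩
  simp only [rules, Set.mem_singleton_iff, Prod.mk.injEq] at h₁ h₂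
  obtain ⟨rfl, -⟩ := h₁
  obtain ⟨rfl, -⟩ := h₂
  have hlt := weight_lt_of_subtermAt (w := fun _ => 1) (w₀ := 1) (fun _ => one_pos) hsub hp
  have : 0 < weight (fun _ => 1) 1 (σ 0) := by cases σ 0 <;> simp
  simp only [subst_app, subst_var, weight_app, List.map, List.sum_cons, List.sum_nil,
    weight_var] at hlt
  omega

theorem rightReduced : RightReduced rules := by
  rintro e rfl
  simpa [nf_app] using normalForm_nf (app g [var 0])

theorem forwardClosed : FCclosed rules := by
  rintro t ⟨hirr, hred⟩ u ⟨htu, hu⟩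
  obtain ⟨v, hv⟩ : ∃ v, OneStep rules t v := by simpa [NormalForm] using hred
  cases oneStep_iff_ctxClosure.1 hv with
  | arg hi hstep =>
    exact absurd (oneStep_iff_ctxClosure.2 hstep) (hirr _ _ (.there hi (.here _)) (by simp) _)
  | root hroot =>
    obtain ⟨x, rfl, rfl⟩ := rootStep_iff.1 hroot
    have hx : NormalForm rules x :=
      hirr [0, 0, 0] x (.there rfl (.there rfl (.there rfl (.here x)))) (by simp)
    have hu : u = app g [x] := by
      rw [← nf_eq_self hu, ← htu.conv.eq_of_oneStep fun _ _ => nf_eq_of_oneStep]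
      simp [nf_app, nf_eq_self hx]
    exact hu ▸ hv

theorem rhsSet_eq : RHSset rules = rules := by
  refine Set.Subset.antisymm ?_ Set.subset_union_left
  rintro e (he | ⟨s, t, u₀, v₀, ρ, σ, hst, huv, ⟨k, -, hk⟩, hmgu, hne, rfl⟩)
  · exact he
  simp only [rules, Set.mem_singleton_iff, Prod.mk.injEq] at hst huv
  obtain ⟨rfl, rfl⟩ := hst
  obtain ⟨rfl, rfl⟩ := huv
  have hσ : σ 0 = σ (k 0) := by simpa [Unifies, hk] using hmgu.1
  simp [hk, hσ] at hne

theorem quasiDet_rhsSet : QuasiDet (RHSset rules) := by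
  rw [rhsSet_eq]
  refine ⟨?_, ?_, ?_⟩ <;> simp [rules, Term.IsVar, Term.root]

theorem lmSystem : LMSystem rules :=
  ⟨convergent, almostLeftReduced, rightReduced, nonSubtermCollapsing, forwardClosed,
    quasiDet_rhsSet⟩

def witness (n : ℕ) : Term Sym3 :=
  (fun s => app f [s])^[n] (app g [(fun s => app h [s])^[n] (var 0)])

theorem oneStep_witness_succ (n : ℕ) : OneStep rules (witness (n + 1)) (witness n) := by
  rw [witness, witness, Function.iterate_succ_apply' (fun s => app h [s]),
    Function.iterate_succ_apply]
  exact OneStep.iterate_app (oneStep_iff_ctxClosure.2 (.root (rootStep_iff.2 ⟨_, rfl, rfl⟩))) n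

theorem conv_witness (n : ℕ) : Conv rules (witness n) (app g [var 0]) := by
  induction n with
  | zero => exact .refl _
  | succ n ih => exact .trans _ _ _ (.rel _ _ (oneStep_witness_succ n)) ih

theorem size_witness (n : ℕ) : size (witness n) = 2 * n + 2 := by
  simp only [witness, size_iterate_app, weight_app, List.map_singleton, List.sum_singleton,
    weight_var]
  omega

theorem convClass_infinite : {t : Term Sym3 | Conv rules t (app g [var 0])}.Infinite :=
  Set.infinite_of_injective_forall_mem
    (fun m n hmn => by simpa [size_witness] using congrArg size hmn) conv_witness

end FGH

open Sym3 in
/-- the single rule f(g(h(x))) → g(x) forms an LM-system whose congruence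
class of g(y) is infinite; so not every LM-system has a finite equational theory. -/
theorem lm_system_infinite_class :
    ∀ (R : TRS Sym3),
      R = {(Term.app f [Term.app g [Term.app h [Term.var 0]]], Term.app g [Term.var 0])} →
    LMSystem R ∧
      { t : Term Sym3 | Conv R t (Term.app g [Term.var 0]) }.Infinite := by
  rintro R rfl
  exact ⟨FGH.lmSystem, FGH.convClass_infinite⟩
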